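/- arXiv:2602.21079 — 4 statements merged into one kernel-verified Lean document; each statement's English description precedes it below -/
import Mathlib

section
/- For all v, u ∈ ℝ³ with v ≠ u, setting V₁(v,u) = (1/(2√2)) · ((|v|² − |u|²)/|v−u|²) · (v−u) and V₂(v,u) = ((v−u) × (v × u)) / (√2 |v−u|²), one has |V₁(v,u)|² + |V₂(v,u)|² = |v+u|²/8. -/
open scoped RealInnerProductSpace

noncomputable def crossP (a b : EuclideanSpace ℝ (Fin 3)) : EuclideanSpace ℝ (Fin 3) :=
  (EuclideanSpace.equiv (Fin 3) ℝ).symm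
    ![a 1 * b 2 - a 2 * b 1, a 2 * b 0 - a 0 * b 2, a 0 * b 1 - a 1 * b 0]

noncomputable def V₁ (v u : EuclideanSpace ℝ (Fin 3)) : EuclideanSpace ℝ (Fin 3) :=
  ((1 / (2 * Real.sqrt 2)) * ((‖v‖ ^ 2 - ‖u‖ ^ 2) / ‖v - u‖ ^ 2)) • (v - u)

noncomputable def V₂ (v u : EuclideanSpace ℝ (Fin 3)) : EuclideanSpace ℝ (Fin 3) :=
  (Real.sqrt 2 * ‖v - u‖ ^ 2)⁻¹ • crossP (v - u) (crossP v u)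

lemma norm_sq_coords (x : EuclideanSpace ℝ (Fin 3)) :
    ‖x‖ ^ 2 = x 0 ^ 2 + x 1 ^ 2 + x 2 ^ 2 := by
  rw [EuclideanSpace.norm_eq, Real.sq_sqrt (by positivity)]
  simp [Fin.sum_univ_three, sq_abs]

lemma crossP_apply (a b : EuclideanSpace ℝ (Fin 3)) :
    crossP a b 0 = a 1 * b 2 - a 2 * b 1 ∧
    crossP a b 1 = a 2 * b 0 - a 0 * b 2 ∧
    crossP a b 2 = a 0 * b 1 - a 1 * b 0 := by
  refine ⟨rfl, rfl, rfl⟩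

set_option maxHeartbeats 2000000 in
theorem V_sq_add (v u : EuclideanSpace ℝ (Fin 3)) (hvu : v ≠ u) :
    ‖V₁ v u‖ ^ 2 + ‖V₂ v u‖ ^ 2 = ‖v + u‖ ^ 2 / 8 := by
  have hs2 : (Real.sqrt 2) ^ 2 = 2 := Real.sq_sqrt (by norm_num)
  have hs : Real.sqrt 2 ≠ 0 := by positivity
  have hw : v - u ≠ 0 := sub_ne_zero.mpr hvu
  have hd : ‖v - u‖ ^ 2 ≠ 0 := by
    simpa using pow_ne_zero 2 (norm_ne_zero_iff.mpr hw)
  rw [V₁, V₂, norm_smul, norm_smul, mul_pow, mul_pow]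
  simp only [Real.norm_eq_abs, sq_abs]
  rw [mul_pow, show ((1:ℝ) / (2 * Real.sqrt 2)) ^ 2 = 1 / 8 by
    rw [div_pow, mul_pow, hs2]; norm_num]
  rw [show ((Real.sqrt 2 * ‖v - u‖ ^ 2)⁻¹) ^ 2 = (2 * (‖v - u‖ ^ 2) ^ 2)⁻¹ by
    rw [inv_pow, mul_pow, hs2]]
  rw [norm_sq_coords (v+u), norm_sq_coords v, norm_sq_coords u,
    norm_sq_coords (v - u), norm_sq_coords (crossP (v-u) (crossP v u))]
  obtain ⟨c0, c1, c2⟩ := crossP_apply (v - u) (crossP v u)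
  obtain ⟨i0, i1, i2⟩ := crossP_apply v u
  rw [norm_sq_coords (v - u)] at hd
  simp only [c0, c1, c2, i0, i1, i2, PiLp.sub_apply, PiLp.add_apply] at *
  set a := v 0; set b := v 1; set c := v 2
  set d := u 0; set e := u 1; set f := u 2
  field_simp
  ring
end

section
/- For all v, u ∈ ℝ³ with v ≠ u, with V₁, V₂ as defined, one has (1/8)|v−u|² + |V₁(v,u)|² + |V₂(v,u)|² = (1/4)(|v|² + |u|²). -/
open scoped RealInnerProductSpace

lemma norm_sq3 (x : EuclideanSpace ℝ (Fin 3)) : ‖x‖^2 = x 0^2 + x 1^2 + x 2^2 := by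
  simp only [EuclideanSpace.norm_eq, Real.norm_eq_abs, sq_abs, Fin.sum_univ_three]
  exact Real.sq_sqrt (by positivity)

lemma inner3 (x y : EuclideanSpace ℝ (Fin 3)) :
    ⟪x, y⟫ = x 0 * y 0 + x 1 * y 1 + x 2 * y 2 := by
  simp [PiLp.inner_apply, Fin.sum_univ_three, mul_comm]

lemma crossP_apply0 (a b : EuclideanSpace ℝ (Fin 3)) :
    crossP a b 0 = a 1 * b 2 - a 2 * b 1 := by simp [crossP]
lemma crossP_apply1 (a b : EuclideanSpace ℝ (Fin 3)) :
    crossP a b 1 = a 2 * b 0 - a 0 * b 2 := by simp [crossP]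
lemma crossP_apply2 (a b : EuclideanSpace ℝ (Fin 3)) :
    crossP a b 2 = a 0 * b 1 - a 1 * b 0 := by simp [crossP]

lemma sub_apply3 (v u : EuclideanSpace ℝ (Fin 3)) (i : Fin 3) : (v - u) i = v i - u i := rfl

lemma cross_norm_sq (v u : EuclideanSpace ℝ (Fin 3)) :
    ‖crossP v u‖ ^ 2 = ‖v‖ ^ 2 * ‖u‖ ^ 2 - ⟪v, u⟫ ^ 2 := by
  simp only [norm_sq3, crossP_apply0, crossP_apply1, crossP_apply2, inner3]
  ring

lemma lagrange (v u : EuclideanSpace ℝ (Fin 3)) :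
    ‖crossP (v - u) (crossP v u)‖ ^ 2 = ‖v - u‖ ^ 2 * ‖crossP v u‖ ^ 2 := by
  simp only [norm_sq3, crossP_apply0, crossP_apply1, crossP_apply2, sub_apply3]
  ring

theorem energy_identity (v u : EuclideanSpace ℝ (Fin 3)) (hvu : v ≠ u) :
    (1 / 8) * ‖v - u‖ ^ 2 + ‖V₁ v u‖ ^ 2 + ‖V₂ v u‖ ^ 2
      = (1 / 4) * (‖v‖ ^ 2 + ‖u‖ ^ 2) := by
  have hs : Real.sqrt 2 ^ 2 = 2 := Real.sq_sqrt (by norm_num)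
  have hs0 : Real.sqrt 2 ≠ 0 := by positivity
  have hD : ‖v - u‖ ^ 2 ≠ 0 :=
    pow_ne_zero 2 (norm_ne_zero_iff.mpr (sub_ne_zero.mpr hvu))
  have h1 : ‖V₁ v u‖ ^ 2 =
      ((1 / (2 * Real.sqrt 2)) * ((‖v‖ ^ 2 - ‖u‖ ^ 2) / ‖v - u‖ ^ 2)) ^ 2 * ‖v - u‖ ^ 2 := by
    rw [V₁, norm_smul, mul_pow, Real.norm_eq_abs, sq_abs]
  have h2 : ‖V₂ v u‖ ^ 2 =
      ((Real.sqrt 2 * ‖v - u‖ ^ 2)⁻¹) ^ 2 * ‖crossP (v - u) (crossP v u)‖ ^ 2 := by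
    rw [V₂, norm_smul, mul_pow, Real.norm_eq_abs, sq_abs]
  have key : ‖v - u‖ ^ 2 = ‖v‖ ^ 2 + ‖u‖ ^ 2 - 2 * ⟪v, u⟫ := by
    rw [@norm_sub_sq_real]; ring
  rw [h1, h2, lagrange, cross_norm_sq]
  rw [key] at hD ⊢
  set A := ‖v‖ ^ 2
  set B := ‖u‖ ^ 2
  set c := ⟪v, u⟫
  simp only [div_pow, mul_pow, inv_pow, mul_inv, one_pow, hs]
  field_simp
  ring
end

section
/- Let α₁, α₃ > 0, α₂ ∈ ℝ, μ < 3. Then there exists a constant C (independent of v) such that for all v ∈ ℝ³, ∫_{ℝ³} |v−u|^{−μ} exp(−α₁|v−u|²) exp(−α₃(((v−u)·v)/|v−u| − α₂|v−u|)²) du ≤ C. -/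
open MeasureTheory
open scoped RealInnerProductSpace

/-
Since α₃ > 0, the last exponential factor is at most 1, so the integrand is dominated by
g(v - u) with g(w) = |w|^{-μ} exp(-α₁|w|²). In polar coordinates g becomes
r^{2-μ} exp(-α₁ r²), integrable on (0, ∞) exactly because μ < 3; by translation invariance of
Lebesgue measure the bound ∫ g does not depend on v.
-/

theorem integrable_norm_rpow_neg_mul_exp_neg_mul_sq {E : Type*} [NormedAddCommGroup E]
    [NormedSpace ℝ E] [FiniteDimensional ℝ E] [Nontrivial E] [MeasurableSpace E] [BorelSpace E]
    (μ : Measure E) [μ.IsAddHaarMeasure] {a s : ℝ} (ha : 0 < a)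
    (hs : s < Module.finrank ℝ E) :
    Integrable (fun x : E => ‖x‖ ^ (-s) * Real.exp (-a * ‖x‖ ^ 2)) μ := by
  rw [integrable_fun_norm_addHaar μ (f := fun y => y ^ (-s) * Real.exp (-a * y ^ 2))]
  have hdim : 1 ≤ Module.finrank ℝ E := Module.finrank_pos
  refine (integrableOn_rpow_mul_exp_neg_mul_sq ha
    (s := Module.finrank ℝ E - 1 - s) (by linarith)).congr_fun (fun y (hy : 0 < y) => ?_)
    measurableSet_Ioi
  rw [smul_eq_mul, ← mul_assoc, ← Real.rpow_natCast, ← Real.rpow_add hy, Nat.cast_sub hdim,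
    Nat.cast_one, sub_eq_add_neg (_ - 1)]

theorem caflisch_estimate_bounded (α₁ α₃ : ℝ) (hα₁ : 0 < α₁) (hα₃ : 0 < α₃) (α₂ μ : ℝ)
    (hμ : μ < 3) :
    ∃ C : ℝ, ∀ v : EuclideanSpace ℝ (Fin 3),
      (∫ u : EuclideanSpace ℝ (Fin 3),
          ‖v - u‖ ^ (-μ) * Real.exp (-α₁ * ‖v - u‖ ^ 2) *
            Real.exp (-α₃ * (⟪v - u, v⟫ / ‖v - u‖ - α₂ * ‖v - u‖) ^ 2))
        ≤ C := by
  set g : EuclideanSpace ℝ (Fin 3) → ℝ := fun w => ‖w‖ ^ (-μ) * Real.exp (-α₁ * ‖w‖ ^ 2)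
  have hg : Integrable g :=
    integrable_norm_rpow_neg_mul_exp_neg_mul_sq volume hα₁ (by simpa [finrank_euclideanSpace])
  refine ⟨∫ w, g w, fun v => ?_⟩
  have hdom : ∀ u, ‖v - u‖ ^ (-μ) * Real.exp (-α₁ * ‖v - u‖ ^ 2) *
      Real.exp (-α₃ * (⟪v - u, v⟫ / ‖v - u‖ - α₂ * ‖v - u‖) ^ 2) ≤ g (v - u) := fun u => by
    refine mul_le_of_le_one_right (by positivity) (Real.exp_le_one_iff.2 ?_)
    exact mul_nonpos_of_nonpos_of_nonneg (neg_nonpos.2 hα₃.le) (sq_nonneg _)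
  calc _ ≤ ∫ u, g (v - u) :=
        integral_mono_of_nonneg (.of_forall fun u => by positivity) (hg.comp_sub_left v)
          (.of_forall hdom)
    _ = ∫ w, g w := integral_sub_left_eq_self g volume v
end

section
/- Let {a_i}_{i≥0} be a sequence of nonnegative reals, k ∈ ℕ, D ≥ 0, and set A_i^k = max{a_i, a_{i+1}, …, a_{i+k}}. If a_{i+1+k} ≤ (1/8) A_i^k + D for all i ≥ 0, then for all i, A_i^k ≤ (1/8)^{⌊i/(k+1)⌋} max{A_0^k, …, A_k^k} + ((8+k)/7) D. -/
theorem recursive_sequence_lemma (a : ℕ → ℝ) (ha : ∀ i, 0 ≤ a i) (k : ℕ) (D : ℝ)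
    (hD : 0 ≤ D)
    (A : ℕ → ℝ)
    (hA : ∀ i, A i = (Finset.range (k + 1)).sup' (Finset.nonempty_range_iff.mpr (Nat.succ_ne_zero k))
      (fun j => a (i + j)))
    (hrec : ∀ i, a (i + 1 + k) ≤ (1 / 8) * A i + D) :
    ∀ i, A i ≤ (1 / 8 : ℝ) ^ (i / (k + 1)) *
        ((Finset.range (k + 1)).sup' (Finset.nonempty_range_iff.mpr (Nat.succ_ne_zero k)) A)
      + ((8 + k : ℝ) / 7) * D := by
  set M := (Finset.range (k + 1)).sup'
      (Finset.nonempty_range_iff.mpr (Nat.succ_ne_zero k)) A with hMdef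
  have haA : ∀ i, 0 ≤ A i := by
    intro i
    have h0 : a (i + 0) ≤ A i := by
      rw [hA i]
      exact Finset.le_sup' (fun j => a (i + j)) (Finset.mem_range.mpr (Nat.succ_pos k))
    exact le_trans (ha (i + 0)) h0
  have hM0 : 0 ≤ M := le_trans (haA 0)
    (Finset.le_sup' A (Finset.mem_range.mpr (Nat.succ_pos k)))
  have hk0 : (0:ℝ) ≤ (k:ℝ) := Nat.cast_nonneg k
  intro i
  induction i using Nat.strong_induction_on with
  | _ i ih =>
    rcases lt_or_ge i (k+1) with h | h
    · have h0 : i / (k+1) = 0 := Nat.div_eq_of_lt h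
      rw [h0, pow_zero, one_mul]
      have h1 : A i ≤ M := Finset.le_sup' A (Finset.mem_range.mpr h)
      have h2 : 0 ≤ ((8+(k:ℝ))/7)*D := by positivity
      linarith
    · set p := i - (k+1) with hp
      have hip : i = p + (k+1) := by omega
      have hq : i/(k+1) = p/(k+1) + 1 := by
        rw [hip, Nat.add_div_right _ (Nat.succ_pos k)]
      rw [hA i]
      apply Finset.sup'_le
      intro j hj
      have hj' := Finset.mem_range.mp hj
      have key : a (i + j) ≤ (1/8) * A (p + j) + D := by
        have heq : i + j = (p + j) + 1 + k := by omega
        rw [heq]; exact hrec (p + j)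
      have hIH : A (p + j) ≤ (1/8:ℝ)^((p+j)/(k+1)) * M + ((8+(k:ℝ))/7)*D :=
        ih (p+j) (by omega)
      have hexp : p/(k+1) ≤ (p+j)/(k+1) := Nat.div_le_div_right (Nat.le_add_right _ _)
      have hpow : (1/8:ℝ)^((p+j)/(k+1)) ≤ (1/8:ℝ)^(p/(k+1)) :=
        pow_le_pow_of_le_one (by norm_num) (by norm_num) hexp
      have hstep : A (p + j) ≤ (1/8:ℝ)^(p/(k+1)) * M + ((8+(k:ℝ))/7)*D := by
        nlinarith [mul_le_mul_of_nonneg_right hpow hM0]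
      have hpos : (0:ℝ) < (1/8:ℝ)^(p/(k+1)) := by positivity
      rw [hq, pow_succ]
      nlinarith [key, hstep]
end
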